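/- Let p ∈ (1,∞), Λ > 0, M > 0 and μ ∈ (0,1]. There exist ϑ ∈ (0, π/2) and μ' > 0, depending only on p, Λ, M and μ, with the following property: whenever A ∈ ℂ^{d×d}, b, c ∈ ℂ^d and V ≥ 0 real satisfy |⟨Aξ,σ⟩| ≤ Λ|ξ||σ| for all ξ, σ ∈ ℂ^d, |b − c| ≤ M√V, and Γ_p^{(A,b,c,V)}(ξ) ≥ μ(|ξ|² + V) for all ξ ∈ ℂ^d, then for every φ ∈ [−ϑ, ϑ] one has Γ_p^{(e^{iφ}A, e^{iφ}b, e^{iφ}c, (cos φ)V)}(ξ) ≥ μ'(|ξ|² + (cos φ)V) for all ξ ∈ ℂ^d. -/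

import Mathlib

open scoped ComplexConjugate

/-- The ℝ-linear operator `𝒥_p ξ = (p/2)(ξ + (1 − 2/p)·conj ξ)` on `ℂ^d`. -/
noncomputable def Jmap (p : ℝ) {d : ℕ} (ξ : EuclideanSpace ℂ (Fin d)) :
    EuclideanSpace ℂ (Fin d) :=
  WithLp.toLp 2 (fun i => (p / 2 : ℂ) * (ξ i + ((1 - 2 / p : ℝ) : ℂ) * conj (ξ i)))

/-- The Hermitian inner product `⟨x,y⟩ = ∑ x i * conj (y i)`, linear in the first variable. -/
noncomputable def hip {d : ℕ} (x y : EuclideanSpace ℂ (Fin d)) : ℂ :=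
  @inner ℂ _ _ y x

/-- A matrix acting on `ℂ^d`. -/
noncomputable def mulVecE {d : ℕ} (A : Matrix (Fin d) (Fin d) ℂ)
    (ξ : EuclideanSpace ℂ (Fin d)) : EuclideanSpace ℂ (Fin d) :=
  WithLp.toLp 2 (fun i => A.mulVec (fun j => ξ j) i)

/-- `Γ_p^{(A,b,c,V)}(ξ) = Re⟨Aξ, 𝒥_p ξ⟩ + Re⟨b + 𝒥_p c, ξ⟩ + V`. -/
noncomputable def Gamma (p : ℝ) {d : ℕ} (A : Matrix (Fin d) (Fin d) ℂ)
    (b c : EuclideanSpace ℂ (Fin d)) (V : ℝ) (ξ : EuclideanSpace ℂ (Fin d)) : ℝ :=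
  (hip (mulVecE A ξ) (Jmap p ξ)).re + (hip (b + Jmap p c) ξ).re + V

/-!
With `L = b + 𝒥_p c` and `K = Λ‖𝒥_p‖`, coercivity at `ξ = -L/(2K)` gives `‖L‖ ≤ 2√(KV)`, and
since `p ≥ 1`, `‖c‖ ≤ ‖c + 𝒥_p c‖ ≤ ‖L‖ + ‖b - c‖ ≤ (2√K + M)√V`. As
`𝒥_p(e^{iφ}c) = e^{iφ}𝒥_p c + ((p-2)/2)(e^{-iφ} - e^{iφ}) c̄`, the rotated form is
`Re(e^{iφ}(Γ(ξ) - V)) + cos φ·V` plus an error of size `|sin φ|·O(‖ξ‖² + V)`. For `cos φ ≥ 1/2`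
the first part keeps `μ/2` of the coercivity and a small `|sin φ|` lets the other terms cost at
most `μ/4`.
-/

noncomputable def conjVec {d : ℕ} (x : EuclideanSpace ℂ (Fin d)) : EuclideanSpace ℂ (Fin d) :=
  WithLp.toLp 2 (fun i => conj (x i))

noncomputable def jmapNormBound (p : ℝ) : ℝ := p / 2 + |(p - 2) / 2|

section
variable {d : ℕ}

@[simp]
lemma norm_conjVec (x : EuclideanSpace ℂ (Fin d)) : ‖conjVec x‖ = ‖x‖ := by
  simp [conjVec, EuclideanSpace.norm_eq]

lemma hip_add_left (x x' y : EuclideanSpace ℂ (Fin d)) :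
    hip (x + x') y = hip x y + hip x' y := inner_add_right y x x'

lemma hip_smul_left (a : ℂ) (x y : EuclideanSpace ℂ (Fin d)) :
    hip (a • x) y = a * hip x y := inner_smul_right y x a

lemma hip_ofReal_smul_right (t : ℝ) (x y : EuclideanSpace ℂ (Fin d)) :
    hip x ((t : ℂ) • y) = t * hip x y := by
  simp [hip]

lemma norm_hip_le (x y : EuclideanSpace ℂ (Fin d)) : ‖hip x y‖ ≤ ‖x‖ * ‖y‖ :=
  (norm_inner_le_norm y x).trans_eq (mul_comm _ _)

lemma re_hip_self (x : EuclideanSpace ℂ (Fin d)) : (hip x x).re = ‖x‖ ^ 2 := by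
  simpa [hip, RCLike.re_to_complex] using inner_self_eq_norm_sq (𝕜 := ℂ) x

lemma mulVecE_smul (a : ℂ) (A : Matrix (Fin d) (Fin d) ℂ) (ξ : EuclideanSpace ℂ (Fin d)) :
    mulVecE (a • A) ξ = a • mulVecE A ξ := by
  ext i
  simp [mulVecE, Matrix.smul_mulVec]

lemma mulVecE_smul_right (A : Matrix (Fin d) (Fin d) ℂ) (a : ℂ) (ξ : EuclideanSpace ℂ (Fin d)) :
    mulVecE A (a • ξ) = a • mulVecE A ξ := by
  ext i
  change A.mulVec (a • fun j => ξ j) i = a * A.mulVec (fun j => ξ j) i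
  rw [Matrix.mulVec_smul]
  rfl

lemma Jmap_eq {p : ℝ} (hp : p ≠ 0) (x : EuclideanSpace ℂ (Fin d)) :
    Jmap p x = ((p / 2 : ℝ) : ℂ) • x + (((p - 2) / 2 : ℝ) : ℂ) • conjVec x := by
  ext i
  simp only [Jmap, conjVec, PiLp.toLp_apply, PiLp.add_apply, PiLp.smul_apply, smul_eq_mul]
  have hpc : (p : ℂ) ≠ 0 := by exact_mod_cast hp
  push_cast
  field_simp

lemma Jmap_ofReal_smul (p t : ℝ) (x : EuclideanSpace ℂ (Fin d)) :
    Jmap p ((t : ℂ) • x) = (t : ℂ) • Jmap p x := by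
  ext i
  simp only [Jmap, PiLp.toLp_apply, PiLp.smul_apply, smul_eq_mul, map_mul, Complex.conj_ofReal]
  ring

lemma Jmap_smul {p : ℝ} (hp : p ≠ 0) (e : ℂ) (x : EuclideanSpace ℂ (Fin d)) :
    Jmap p (e • x) = e • Jmap p x + ((((p - 2) / 2 : ℝ) : ℂ) * (conj e - e)) • conjVec x := by
  rw [Jmap_eq hp, Jmap_eq hp]
  ext i
  simp only [conjVec, PiLp.add_apply, PiLp.smul_apply, smul_eq_mul, map_mul]
  ring

lemma norm_Jmap_le {p : ℝ} (hp : 0 < p) (x : EuclideanSpace ℂ (Fin d)) :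
    ‖Jmap p x‖ ≤ jmapNormBound p * ‖x‖ := by
  rw [Jmap_eq hp.ne']
  calc _ ≤ ‖((p / 2 : ℝ) : ℂ) • x‖ + ‖(((p - 2) / 2 : ℝ) : ℂ) • conjVec x‖ := norm_add_le _ _
    _ = jmapNormBound p * ‖x‖ := by
      simp only [norm_smul, norm_conjVec, Complex.norm_real, Real.norm_eq_abs, jmapNormBound,
        abs_of_pos (half_pos hp)]
      ring

lemma norm_le_norm_add_Jmap {p : ℝ} (hp : 1 ≤ p) (x : EuclideanSpace ℂ (Fin d)) :
    ‖x‖ ≤ ‖x + Jmap p x‖ := by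
  have hx : x + Jmap p x = ((1 + p / 2 : ℝ) : ℂ) • x + (((p - 2) / 2 : ℝ) : ℂ) • conjVec x := by
    rw [Jmap_eq (by linarith)]
    ext i
    simp only [PiLp.add_apply, PiLp.smul_apply, smul_eq_mul]
    push_cast
    ring
  have h := norm_sub_norm_le (((1 + p / 2 : ℝ) : ℂ) • x) (-((((p - 2) / 2 : ℝ) : ℂ) • conjVec x))
  rw [sub_neg_eq_add, ← hx, norm_neg] at h
  simp only [norm_smul, norm_conjVec, Complex.norm_real, Real.norm_eq_abs,
    abs_of_pos (by linarith : (0 : ℝ) < 1 + p / 2)] at h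
  have : |(p - 2) / 2| ≤ p / 2 := abs_le.mpr ⟨by linarith, by linarith⟩
  nlinarith [norm_nonneg x]

end

section
variable {d : ℕ} {p : ℝ} (A : Matrix (Fin d) (Fin d) ℂ) (b c : EuclideanSpace ℂ (Fin d)) (V : ℝ)

lemma norm_hip_mulVecE_Jmap_le (hp : 0 < p) {Λ : ℝ} (hΛ : 0 ≤ Λ)
    (hA : ∀ ξ σ : EuclideanSpace ℂ (Fin d), ‖hip (mulVecE A ξ) σ‖ ≤ Λ * ‖ξ‖ * ‖σ‖)
    (ξ : EuclideanSpace ℂ (Fin d)) :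
    ‖hip (mulVecE A ξ) (Jmap p ξ)‖ ≤ Λ * jmapNormBound p * ‖ξ‖ ^ 2 := by
  calc _ ≤ Λ * ‖ξ‖ * ‖Jmap p ξ‖ := hA ξ _
    _ ≤ Λ * ‖ξ‖ * (jmapNormBound p * ‖ξ‖) := by gcongr; exact norm_Jmap_le hp ξ
    _ = Λ * jmapNormBound p * ‖ξ‖ ^ 2 := by ring

lemma norm_le_norm_add_Jmap_add_norm_sub (hp : 1 ≤ p) : ‖c‖ ≤ ‖b + Jmap p c‖ + ‖b - c‖ :=
  calc ‖c‖ ≤ ‖c + Jmap p c‖ := norm_le_norm_add_Jmap hp c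
    _ = ‖(b + Jmap p c) - (b - c)‖ := by abel_nf
    _ ≤ ‖b + Jmap p c‖ + ‖b - c‖ := norm_sub_le _ _

lemma Gamma_ofReal_smul (t : ℝ) (ξ : EuclideanSpace ℂ (Fin d)) :
    Gamma p A b c V ((t : ℂ) • ξ) =
      t ^ 2 * (hip (mulVecE A ξ) (Jmap p ξ)).re + t * (hip (b + Jmap p c) ξ).re + V := by
  rw [Gamma, mulVecE_smul_right, Jmap_ofReal_smul, hip_smul_left, hip_ofReal_smul_right,
    hip_ofReal_smul_right, ← mul_assoc, ← Complex.ofReal_mul, Complex.re_ofReal_mul,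
    Complex.re_ofReal_mul]
  ring

lemma norm_add_Jmap_le {K : ℝ} (hK : 0 < K) (hV : 0 ≤ V)
    (hA : ∀ ξ : EuclideanSpace ℂ (Fin d), (hip (mulVecE A ξ) (Jmap p ξ)).re ≤ K * ‖ξ‖ ^ 2)
    (hΓ : ∀ ξ, 0 ≤ Gamma p A b c V ξ) :
    ‖b + Jmap p c‖ ≤ 2 * √K * √V := by
  set L := b + Jmap p c
  set t : ℝ := (2 * K)⁻¹
  have hΓL := hΓ (((-t : ℝ) : ℂ) • L)
  rw [Gamma_ofReal_smul, re_hip_self] at hΓL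
  have hAL := mul_le_mul_of_nonneg_left (hA L) (sq_nonneg (-t))
  have htK : t * K = 1 / 2 := by simp only [t]; field_simp
  have hquad : (-t) ^ 2 * (K * ‖L‖ ^ 2) = t * ‖L‖ ^ 2 / 2 := by
    linear_combination t * ‖L‖ ^ 2 * htK
  have htL : t * ‖L‖ ^ 2 ≤ 2 * V := by linarith
  have hL2 : ‖L‖ ^ 2 ≤ (2 * √K * √V) ^ 2 :=
    calc ‖L‖ ^ 2 = 2 * K * (t * ‖L‖ ^ 2) := by linear_combination -2 * ‖L‖ ^ 2 * htK
      _ ≤ 2 * K * (2 * V) := by gcongr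
      _ = (2 * √K * √V) ^ 2 := by rw [mul_pow, mul_pow, Real.sq_sqrt hK.le, Real.sq_sqrt hV]; ring
  exact (pow_le_pow_iff_left₀ (norm_nonneg _) (by positivity) two_ne_zero).mp hL2
lemma Gamma_smul (e : ℂ) (W : ℝ) (ξ : EuclideanSpace ℂ (Fin d)) :
    Gamma p (e • A) (e • b) (e • c) W ξ =
      (e * (hip (mulVecE A ξ) (Jmap p ξ) + hip (b + Jmap p c) ξ)).re
        + (hip (Jmap p (e • c) - e • Jmap p c) ξ).re + W := by
  have hdrift : e • b + Jmap p (e • c) = e • (b + Jmap p c) + (Jmap p (e • c) - e • Jmap p c) := by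
    rw [smul_add]; abel
  rw [Gamma, mulVecE_smul, hdrift, hip_add_left, hip_smul_left, hip_smul_left, mul_add,
    Complex.add_re, Complex.add_re]
  ring

end

lemma norm_conj_exp_sub_exp (φ : ℝ) :
    ‖conj (Complex.exp (φ * Complex.I)) - Complex.exp (φ * Complex.I)‖ = 2 * |Real.sin φ| := by
  rw [← norm_neg, neg_sub, Complex.sub_conj, norm_mul, Complex.norm_real, Complex.norm_I,
    Real.norm_eq_abs, abs_mul, Complex.exp_ofReal_mul_I_im]
  norm_num

lemma norm_Jmap_exp_smul_sub {d : ℕ} {p : ℝ} (hp : p ≠ 0) (φ : ℝ) (c : EuclideanSpace ℂ (Fin d)) :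
    ‖Jmap p (Complex.exp (φ * Complex.I) • c) - Complex.exp (φ * Complex.I) • Jmap p c‖
      = |p - 2| * |Real.sin φ| * ‖c‖ := by
  rw [Jmap_smul hp, add_sub_cancel_left, norm_smul, norm_mul, Complex.norm_real,
    norm_conj_exp_sub_exp, norm_conjVec, Real.norm_eq_abs, abs_div, abs_two]
  ring

lemma le_of_abs_perturbation_le {μ K C c s x V Q E : ℝ} (hμ : 0 < μ) (hK : 0 ≤ K) (hC : 0 ≤ C)
    (hV : 0 ≤ V) (hc : 1 / 2 ≤ c) (hs : |s| * (K + C) ≤ μ / 4)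
    (hQ : μ * (x ^ 2 + V) ≤ Q + V) (hE : |E| ≤ |s| * (K * x ^ 2 + C * √V * x)) :
    μ / 4 * (x ^ 2 + c * V) ≤ c * Q + E + c * V := by
  have hvx : √V * x ≤ (x ^ 2 + V) / 2 := by nlinarith [sq_nonneg (x - √V), Real.sq_sqrt hV]
  have hEsmall : |E| ≤ μ / 4 * (x ^ 2 + V) := by
    calc |E| ≤ |s| * (K * x ^ 2 + C * √V * x) := hE
      _ ≤ |s| * ((K + C) * (x ^ 2 + V)) := by
        gcongr
        nlinarith [mul_nonneg hK hV, mul_le_mul_of_nonneg_left hvx hC]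
      _ ≤ μ / 4 * (x ^ 2 + V) := by
        rw [← mul_assoc]; gcongr
  have hcQ : c * (μ * (x ^ 2 + V)) ≤ c * (Q + V) := by gcongr
  nlinarith [neg_abs_le E, mul_nonneg hμ.le (sq_nonneg x), mul_nonneg hμ.le hV]

/-- `K + α + |p - 2| (α + M)` with `K = Λ ‖𝒥_p‖` and `α = 2√K`, from the bounds
`‖b + 𝒥_p c‖ ≤ α√V` and `‖c‖ ≤ (α + M)√V`. -/
noncomputable def rotationConst (p Λ M : ℝ) : ℝ :=
  Λ * jmapNormBound p + 2 * √(Λ * jmapNormBound p)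
    + |p - 2| * (2 * √(Λ * jmapNormBound p) + M)

lemma jmapNormBound_pos {p : ℝ} (hp : 0 < p) : 0 < jmapNormBound p := by
  unfold jmapNormBound; positivity

lemma rotationConst_pos {p Λ M : ℝ} (hp : 0 < p) (hΛ : 0 < Λ) (hM : 0 ≤ M) :
    0 < rotationConst p Λ M := by
  have := jmapNormBound_pos hp
  unfold rotationConst; positivity

theorem le_Gamma_exp_smul {d : ℕ} {p Λ M μ V φ : ℝ} (hp : 1 < p) (hΛ : 0 < Λ) (hM : 0 ≤ M)
    (hμ : 0 < μ) (hV : 0 ≤ V) {A : Matrix (Fin d) (Fin d) ℂ} {b c : EuclideanSpace ℂ (Fin d)}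
    (hA : ∀ ξ σ : EuclideanSpace ℂ (Fin d), ‖hip (mulVecE A ξ) σ‖ ≤ Λ * ‖ξ‖ * ‖σ‖)
    (hbc : ‖b - c‖ ≤ M * √V)
    (hΓ : ∀ ξ : EuclideanSpace ℂ (Fin d), μ * (‖ξ‖ ^ 2 + V) ≤ Gamma p A b c V ξ)
    (hcos : 1 / 2 ≤ Real.cos φ) (hsin : |Real.sin φ| * rotationConst p Λ M ≤ μ / 4)
    (ξ : EuclideanSpace ℂ (Fin d)) :
    μ / 4 * (‖ξ‖ ^ 2 + Real.cos φ * V) ≤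
      Gamma p (Complex.exp (φ * Complex.I) • A) (Complex.exp (φ * Complex.I) • b)
        (Complex.exp (φ * Complex.I) • c) (Real.cos φ * V) ξ := by
  have hp0 : 0 < p := by linarith
  set K := Λ * jmapNormBound p
  have hK : 0 < K := mul_pos hΛ (jmapNormBound_pos hp0)
  set α := 2 * √K
  set L := b + Jmap p c
  have hAJ := norm_hip_mulVecE_Jmap_le A hp0 hΛ.le hA
  have hL : ‖L‖ ≤ α * √V :=
    norm_add_Jmap_le A b c V hK hV (fun ζ => (Complex.re_le_norm _).trans (hAJ ζ))
      (fun ζ => (by positivity : 0 ≤ μ * (‖ζ‖ ^ 2 + V)).trans (hΓ ζ))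
  have hc : ‖c‖ ≤ (α + M) * √V := by
    linarith [norm_le_norm_add_Jmap_add_norm_sub b c hp.le]
  set q := hip (mulVecE A ξ) (Jmap p ξ) + hip L ξ
  have hq : |q.im| ≤ K * ‖ξ‖ ^ 2 + α * √V * ‖ξ‖ :=
    calc |q.im| ≤ ‖q‖ := Complex.abs_im_le_norm q
      _ ≤ ‖hip (mulVecE A ξ) (Jmap p ξ)‖ + ‖hip L ξ‖ := norm_add_le _ _
      _ ≤ K * ‖ξ‖ ^ 2 + α * √V * ‖ξ‖ := by
        gcongr
        · exact hAJ ξ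
        · exact (norm_hip_le L ξ).trans (by gcongr)
  set Δ := Jmap p (Complex.exp (φ * Complex.I) • c) - Complex.exp (φ * Complex.I) • Jmap p c
  have hΔ : |(hip Δ ξ).re| ≤ |p - 2| * |Real.sin φ| * ((α + M) * √V) * ‖ξ‖ :=
    calc |(hip Δ ξ).re| ≤ ‖Δ‖ * ‖ξ‖ := (Complex.abs_re_le_norm _).trans (norm_hip_le Δ ξ)
      _ = |p - 2| * |Real.sin φ| * ‖c‖ * ‖ξ‖ := by rw [norm_Jmap_exp_smul_sub hp0.ne']
      _ ≤ |p - 2| * |Real.sin φ| * ((α + M) * √V) * ‖ξ‖ := by gcongr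
  have hE : |-(Real.sin φ * q.im) + (hip Δ ξ).re|
      ≤ |Real.sin φ| * (K * ‖ξ‖ ^ 2 + (α + |p - 2| * (α + M)) * √V * ‖ξ‖) :=
    calc _ ≤ |Real.sin φ| * |q.im| + |(hip Δ ξ).re| := by
          simpa only [abs_neg, abs_mul] using abs_add_le (-(Real.sin φ * q.im)) (hip Δ ξ).re
      _ ≤ |Real.sin φ| * (K * ‖ξ‖ ^ 2 + α * √V * ‖ξ‖)
          + |p - 2| * |Real.sin φ| * ((α + M) * √V) * ‖ξ‖ := by gcongr
      _ = _ := by ring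
  have hQ : μ * (‖ξ‖ ^ 2 + V) ≤ q.re + V := by simpa only [Gamma, q, Complex.add_re] using hΓ ξ
  have hs : |Real.sin φ| * (K + (α + |p - 2| * (α + M))) ≤ μ / 4 := by
    simpa only [rotationConst, add_assoc] using hsin
  have := le_of_abs_perturbation_le hμ hK.le (by positivity) hV hcos hs hQ hE
  rw [Gamma_smul, Complex.mul_re, Complex.exp_ofReal_mul_I_re,
    Complex.exp_ofReal_mul_I_im]
  linarith

theorem stmt6_general (p Λ M μ : ℝ) (hp : 1 < p)
    (hΛ : 0 < Λ) (hM : 0 < M) (hμ0 : 0 < μ) :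
    ∃ ϑ μ' : ℝ, 0 < ϑ ∧ ϑ < Real.pi / 2 ∧ 0 < μ' ∧
      ∀ (d : ℕ), 1 ≤ d →
        ∀ (A : Matrix (Fin d) (Fin d) ℂ) (b c : EuclideanSpace ℂ (Fin d)) (V : ℝ),
          0 ≤ V →
          (∀ ξ σ : EuclideanSpace ℂ (Fin d),
            ‖hip (mulVecE A ξ) σ‖ ≤ Λ * ‖ξ‖ * ‖σ‖) →
          ‖b - c‖ ≤ M * Real.sqrt V →
          (∀ ξ : EuclideanSpace ℂ (Fin d), μ * (‖ξ‖ ^ 2 + V) ≤ Gamma p A b c V ξ) →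
          ∀ φ : ℝ, -ϑ ≤ φ → φ ≤ ϑ →
            ∀ ξ : EuclideanSpace ℂ (Fin d),
              μ' * (‖ξ‖ ^ 2 + Real.cos φ * V) ≤
                Gamma p (Complex.exp (φ * Complex.I) • A)
                  (Complex.exp (φ * Complex.I) • b)
                  (Complex.exp (φ * Complex.I) • c)
                  (Real.cos φ * V) ξ := by
  have hD := rotationConst_pos (by linarith) hΛ hM.le (p := p)
  set D := rotationConst p Λ M
  have hπ := Real.pi_pos
  refine ⟨min (Real.pi / 3) (μ / (4 * D)), μ / 4, by positivity,
    (min_le_left _ _).trans_lt (by linarith), by positivity, ?_⟩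
  intro d _ A b c V hV hA hbc hΓ φ hφ₁ hφ₂ ξ
  have hφ : |φ| ≤ min (Real.pi / 3) (μ / (4 * D)) := abs_le.mpr ⟨hφ₁, hφ₂⟩
  refine le_Gamma_exp_smul hp hΛ hM.le hμ0 hV hA hbc hΓ ?_ ?_ ξ
  · calc 1 / 2 = Real.cos (Real.pi / 3) := Real.cos_pi_div_three.symm
      _ ≤ Real.cos |φ| := Real.cos_le_cos_of_nonneg_of_le_pi (abs_nonneg φ) (by linarith)
          (hφ.trans (min_le_left _ _))
      _ = Real.cos φ := Real.cos_abs φ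
  · calc |Real.sin φ| * D ≤ μ / (4 * D) * D :=
          by gcongr; exact Real.abs_sin_le_abs.trans (hφ.trans (min_le_right _ _))
      _ = μ / 4 := by field_simp

theorem stmt6 (p Λ M μ : ℝ) (hp : 1 < p)
    (hΛ : 0 < Λ) (hM : 0 < M) (hμ0 : 0 < μ) (hμ1 : μ ≤ 1) :
    ∃ ϑ μ' : ℝ, 0 < ϑ ∧ ϑ < Real.pi / 2 ∧ 0 < μ' ∧
      ∀ (d : ℕ), 1 ≤ d →
        ∀ (A : Matrix (Fin d) (Fin d) ℂ) (b c : EuclideanSpace ℂ (Fin d)) (V : ℝ),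
          0 ≤ V →
          (∀ ξ σ : EuclideanSpace ℂ (Fin d),
            ‖hip (mulVecE A ξ) σ‖ ≤ Λ * ‖ξ‖ * ‖σ‖) →
          ‖b - c‖ ≤ M * Real.sqrt V →
          (∀ ξ : EuclideanSpace ℂ (Fin d), μ * (‖ξ‖ ^ 2 + V) ≤ Gamma p A b c V ξ) →
          ∀ φ : ℝ, -ϑ ≤ φ → φ ≤ ϑ →
            ∀ ξ : EuclideanSpace ℂ (Fin d),
              μ' * (‖ξ‖ ^ 2 + Real.cos φ * V) ≤
                Gamma p (Complex.exp (φ * Complex.I) • A)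
                  (Complex.exp (φ * Complex.I) • b)
                  (Complex.exp (φ * Complex.I) • c)
                  (Real.cos φ * V) ξ :=
  stmt6_general p Λ M μ hp hΛ hM hμ0
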